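/- arXiv:1404.4819 — 4 statements merged into one kernel-verified Lean document; each statement's English description precedes it below -/
import Mathlib

section
/- Let k be a field of characteristic 0 and let A be a Poisson algebra over k. Then there exists a k-bilinear bracket [·,·] on Ω_{A/k} satisfying [a df, b dg] = ab d{f,g} + a{f,b} dg − b{g,a} df for all a, b, f, g ∈ A (in particular [df, dg] = d{f,g}), and this bracket is alternating, satisfies the Jacobi identity (so Ω_{A/k} is a Lie algebra over k), satisfies the Leibniz rule [ξ, a·ζ] = a·[ξ,ζ] + ρ(ξ)(a)·ζ for all a ∈ A and ξ, ζ ∈ Ω_{A/k}, and the anchor ρ is a homomorphism of Lie algebras: ρ([ξ,ζ]) = ρ(ξ)∘ρ(ζ) − ρ(ζ)∘ρ(ξ). In other words, (A, Ω_{A/k}) is a Lie–Rinehart algebra over k. -/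
/-!
Write `I` for the kernel of the multiplication `μ : A ⊗[k] A → A`, so that `Ω[A⁄k] = I / I²`.
The bracket `β (a ⊗ b) (c ⊗ d) = a c ⊗ {b, d} - {a, c} ⊗ b d` on `A ⊗[k] A` is alternating,
satisfies the Jacobi identity and is a derivation in each argument. For `x ∈ I` the map
`w ↦ μ (β x w)` factors through `μ`, and the induced derivation of `A` is the anchor of the class
of `x`. Hence `β` preserves `I`, so by the Leibniz rule also `β I I² ⊆ I²`, and it descends to
`I / I²`; the Lie–Rinehart identities are images of the corresponding identities for `β`.
-/

open TensorProduct

lemma tmul_eq_includeLeft_mul_includeRight {R B C : Type*} [CommSemiring R] [Semiring B]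
    [Algebra R B] [Semiring C] [Algebra R C] (b : B) (c : C) :
    b ⊗ₜ[R] c = Algebra.TensorProduct.includeLeft (S := R) b *
      Algebra.TensorProduct.includeRight c := by
  simp

section TensorBracket

variable {k A : Type*} [CommRing k] [CommRing A] [Algebra k A] (bracket : A →ₗ[k] A →ₗ[k] A)

lemma bracket_one_right
    (leibniz : ∀ a b c, bracket a (b * c) = bracket a b * c + b * bracket a c) (a : A) :
    bracket a 1 = 0 := by
  simpa using leibniz a 1 1

lemma bracket_mul_left (alt : bracket.IsAlt)
    (leibniz : ∀ a b c, bracket a (b * c) = bracket a b * c + b * bracket a c) (a b c : A) :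
    bracket (a * b) c = a * bracket b c + b * bracket a c := by
  rw [← alt.neg, leibniz, ← alt.neg c a, ← alt.neg c b]
  ring

/-- The tensor product Poisson bracket on `A ⊗[k] A`, with the opposite bracket on the left
factor. -/
noncomputable def tensorBracket : A ⊗[k] A →ₗ[k] A ⊗[k] A →ₗ[k] A ⊗[k] A :=
  TensorProduct.curry <|
    (map (LinearMap.mul' k A) (lift bracket) - map (lift bracket) (LinearMap.mul' k A)) ∘ₗ
      (tensorTensorTensorComm k A A A A).toLinearMap

@[simp]
lemma tensorBracket_tmul (a b c d : A) :
    tensorBracket bracket (a ⊗ₜ b) (c ⊗ₜ d) = (a * c) ⊗ₜ bracket b d - bracket a c ⊗ₜ (b * d) :=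
  rfl

lemma tensorBracket_swap (alt : bracket.IsAlt) (x y : A ⊗[k] A) :
    -tensorBracket bracket x y = tensorBracket bracket y x := by
  suffices -tensorBracket bracket = (tensorBracket bracket).flip from
    LinearMap.congr_fun₂ this x y
  ext a b c d
  simp [← alt.neg d b, ← alt.neg c a, mul_comm, tmul_neg, neg_tmul, sub_eq_add_neg, add_comm]

lemma tensorBracket_isAlt (alt : bracket.IsAlt) : (tensorBracket bracket).IsAlt := by
  intro x
  induction x using TensorProduct.induction_on with
  | zero => simp
  | add x y hx hy =>
    simp only [map_add, LinearMap.add_apply, hx, hy, ← tensorBracket_swap bracket alt x y]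
    abel
  | tmul a b => simp [alt.self_eq_zero]

lemma tensorBracket_mul_right
    (leibniz : ∀ a b c, bracket a (b * c) = bracket a b * c + b * bracket a c)
    (x y z : A ⊗[k] A) :
    tensorBracket bracket x (y * z) =
      tensorBracket bracket x y * z + y * tensorBracket bracket x z := by
  induction x using TensorProduct.induction_on with
  | zero => simp
  | add x x' hx hx' => simp only [map_add, LinearMap.add_apply, hx, hx']; ring
  | tmul a b =>
    induction y using TensorProduct.induction_on with
    | zero => simp
    | add y y' hy hy' => simp only [add_mul, map_add, hy, hy']; ring
    | tmul c d =>
      induction z using TensorProduct.induction_on with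
      | zero => simp
      | add z z' hz hz' => simp only [mul_add, map_add, hz, hz']; ring
      | tmul e f =>
        simp only [Algebra.TensorProduct.tmul_mul_tmul, tensorBracket_tmul, leibniz]
        simp only [tmul_eq_includeLeft_mul_includeRight (R := k), map_mul, map_add]
        ring

lemma tensorBracket_jacobi (alt : bracket.IsAlt)
    (jacobi : ∀ a b c, bracket a (bracket b c) = bracket (bracket a b) c + bracket b (bracket a c))
    (leibniz : ∀ a b c, bracket a (b * c) = bracket a b * c + b * bracket a c)
    (x y z : A ⊗[k] A) :
    tensorBracket bracket x (tensorBracket bracket y z) =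
      tensorBracket bracket (tensorBracket bracket x y) z +
        tensorBracket bracket y (tensorBracket bracket x z) := by
  induction x using TensorProduct.induction_on with
  | zero => simp
  | add x x' hx hx' => simp only [map_add, LinearMap.add_apply, hx, hx']; abel
  | tmul a b =>
    induction y using TensorProduct.induction_on with
    | zero => simp
    | add y y' hy hy' => simp only [map_add, LinearMap.add_apply, hy, hy']; abel
    | tmul c d =>
      induction z using TensorProduct.induction_on with
      | zero => simp
      | add z z' hz hz' => simp only [map_add, hz, hz']; abel
      | tmul e f =>
        simp only [tensorBracket_tmul, map_sub, LinearMap.sub_apply, jacobi b d f, jacobi a c e,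
          leibniz, bracket_mul_left bracket alt leibniz, ← alt.neg b d, ← alt.neg a c]
        simp only [tmul_eq_includeLeft_mul_includeRight (R := k), map_mul, map_add, map_neg]
        ring

end TensorBracket

namespace Ideal

variable {k S : Type*} [CommRing k] [CommRing S] [Algebra k S] {I : Ideal S}

lemma apply_mem_sq_of_mem_of_mem_sq (β : S →ₗ[k] S →ₗ[k] S)
    (mul_right : ∀ x y z, β x (y * z) = β x y * z + y * β x z)
    (hI : ∀ x ∈ I, ∀ y ∈ I, β x y ∈ I) {x y : S} (hx : x ∈ I) (hy : y ∈ I ^ 2) :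
    β x y ∈ I ^ 2 := by
  rw [pow_two] at hy ⊢
  refine Submodule.mul_induction_on hy (fun m hm n hn => ?_) fun u v hu hv => ?_
  · rw [mul_right]
    exact add_mem (mul_mem_mul (hI x hx m hm) hn) (mul_mem_mul hm (hI x hx n hn))
  · rw [map_add]
    exact add_mem hu hv

namespace Cotangent

noncomputable def bracket (β : S →ₗ[k] S →ₗ[k] S) (hβ : β.IsAlt)
    (mul_right : ∀ x y z, β x (y * z) = β x y * z + y * β x z)
    (hI : ∀ x ∈ I, ∀ y ∈ I, β x y ∈ I) :
    I.Cotangent →ₗ[k] I.Cotangent →ₗ[k] I.Cotangent :=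
  let β' : I →ₗ[k] I →ₗ[k] I.Cotangent :=
    LinearMap.mk₂ k (fun x y => I.toCotangent ⟨β x y, hI x x.2 y y.2⟩)
      (fun x x' y => by simp only [← map_add]; congr 1; ext; simp)
      (fun c x y => by simp only [← LinearMap.map_smul_of_tower]; congr 1; ext; simp)
      (fun x y y' => by simp only [← map_add]; congr 1; ext; simp)
      (fun c x y => by simp only [← LinearMap.map_smul_of_tower]; congr 1; ext; simp)
  lift (lift β'.flip fun y y' => by
      ext x
      exact (toCotangent_eq_zero _ _).2 (apply_mem_sq_of_mem_of_mem_sq β mul_right hI x.2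
        (pow_two I ▸ mul_mem_mul y.2 y'.2))).flip
    fun x x' => by
      ext ζ
      obtain ⟨y, rfl⟩ := I.toCotangent_surjective ζ
      refine (toCotangent_eq_zero _ _).2 ?_
      change β (x * x' : S) y ∈ I ^ 2
      rw [← hβ.neg]
      exact neg_mem (apply_mem_sq_of_mem_of_mem_sq β mul_right hI y.2
        (pow_two I ▸ mul_mem_mul x.2 x'.2))

variable (β : S →ₗ[k] S →ₗ[k] S) (hβ : β.IsAlt)
  (mul_right : ∀ x y z, β x (y * z) = β x y * z + y * β x z)
  (hI : ∀ x ∈ I, ∀ y ∈ I, β x y ∈ I)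

lemma bracket_toCotangent (x y : I) :
    bracket β hβ mul_right hI (I.toCotangent x) (I.toCotangent y) =
      I.toCotangent ⟨β x y, hI x x.2 y y.2⟩ :=
  rfl

lemma bracket_isAlt : (bracket β hβ mul_right hI).IsAlt := by
  intro ξ
  obtain ⟨x, rfl⟩ := I.toCotangent_surjective ξ
  refine (toCotangent_eq_zero _ _).2 ?_
  change β x x ∈ I ^ 2
  rw [hβ.self_eq_zero]
  exact zero_mem _

lemma bracket_jacobi (jacobi : ∀ x y z, β x (β y z) = β (β x y) z + β y (β x z))
    (ξ ζ η : I.Cotangent) :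
    bracket β hβ mul_right hI ξ (bracket β hβ mul_right hI ζ η) =
      bracket β hβ mul_right hI (bracket β hβ mul_right hI ξ ζ) η +
        bracket β hβ mul_right hI ζ (bracket β hβ mul_right hI ξ η) := by
  obtain ⟨x, rfl⟩ := I.toCotangent_surjective ξ
  obtain ⟨y, rfl⟩ := I.toCotangent_surjective ζ
  obtain ⟨z, rfl⟩ := I.toCotangent_surjective η
  simp only [bracket_toCotangent, ← map_add]
  exact congrArg _ (Subtype.ext (jacobi x y z))

lemma bracket_toCotangent_smul (x : I) (s : S) (ζ : I.Cotangent) :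
    bracket β hβ mul_right hI (I.toCotangent x) (s • ζ) =
      s • bracket β hβ mul_right hI (I.toCotangent x) ζ + β x s • ζ := by
  obtain ⟨y, rfl⟩ := I.toCotangent_surjective ζ
  simp only [← map_smul, bracket_toCotangent, ← map_add]
  exact congrArg _ (Subtype.ext (by simp [mul_right, add_comm]))

end Cotangent

end Ideal

namespace KaehlerDifferential

open Algebra.TensorProduct

variable {k A : Type*} [CommRing k] [CommRing A] [Algebra k A] (bracket : A →ₗ[k] A →ₗ[k] A)

lemma smul_eq_lmul'_smul (s : A ⊗[k] A) (ω : Ω[A⁄k]) : s • ω = lmul' k s • ω := by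
  rw [← algebraMap_smul (A ⊗[k] A) (lmul' k s) ω, ← sub_eq_zero, ← sub_smul]
  refine Ideal.Cotangent.smul_eq_zero_of_mem ?_ ω
  simp [RingHom.mem_ker]

lemma lmul'_tensorBracket_tmul (alt : bracket.IsAlt)
    (leibniz : ∀ a b c, bracket a (b * c) = bracket a b * c + b * bracket a c)
    (x : A ⊗[k] A) (c d : A) :
    lmul' k (tensorBracket bracket x (c ⊗ₜ d)) + d * bracket (lmul' k x) c =
      lmul' k (tensorBracket bracket x (1 ⊗ₜ (c * d))) := by
  induction x using TensorProduct.induction_on with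
  | zero => simp
  | add x x' hx hx' => simp only [map_add, LinearMap.add_apply, ← hx, ← hx']; ring
  | tmul a b =>
    simp only [tensorBracket_tmul, map_sub, lmul'_apply_tmul, leibniz,
      bracket_mul_left bracket alt leibniz, bracket_one_right bracket leibniz]
    ring

lemma lmul'_tensorBracket_of_mem (alt : bracket.IsAlt)
    (leibniz : ∀ a b c, bracket a (b * c) = bracket a b * c + b * bracket a c)
    {x : A ⊗[k] A} (hx : x ∈ ideal k A) (w : A ⊗[k] A) :
    lmul' k (tensorBracket bracket x w) =
      lmul' k (tensorBracket bracket x (1 ⊗ₜ lmul' k w)) := by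
  induction w using TensorProduct.induction_on with
  | zero => simp
  | add w w' hw hw' => simp only [map_add, hw, hw', tmul_add]
  | tmul c d =>
    rw [lmul'_apply_tmul, ← lmul'_tensorBracket_tmul bracket alt leibniz, RingHom.mem_ker.1 hx]
    simp

lemma tensorBracket_mem_ideal (alt : bracket.IsAlt)
    (leibniz : ∀ a b c, bracket a (b * c) = bracket a b * c + b * bracket a c)
    {x y : A ⊗[k] A} (hx : x ∈ ideal k A) (hy : y ∈ ideal k A) :
    tensorBracket bracket x y ∈ ideal k A := by
  rw [RingHom.mem_ker, lmul'_tensorBracket_of_mem bracket alt leibniz hx, RingHom.mem_ker.1 hy]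
  simp

lemma anchor_fromIdeal
    (leibniz : ∀ a b c, bracket a (b * c) = bracket a b * c + b * bracket a c)
    (ρ : Ω[A⁄k] →ₗ[A] Derivation k A A) (hρ : ∀ f b, ρ (D k A f) b = bracket f b)
    (x : ideal k A) (e : A) :
    ρ (fromIdeal k A x) e = lmul' k (tensorBracket bracket x (1 ⊗ₜ e)) := by
  rw [show fromIdeal k A x = (D k A).tensorProductTo x from (D_tensorProductTo x).symm]
  induction (x : A ⊗[k] A) using TensorProduct.induction_on with
  | zero => simp
  | add x x' hx hx' => simp only [map_add, Derivation.add_apply, LinearMap.add_apply, hx, hx']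
  | tmul a b => simp [Derivation.tensorProductTo_tmul, hρ, bracket_one_right bracket leibniz]

noncomputable def koszulBracket (alt : bracket.IsAlt)
    (leibniz : ∀ a b c, bracket a (b * c) = bracket a b * c + b * bracket a c) :
    Ω[A⁄k] →ₗ[k] Ω[A⁄k] →ₗ[k] Ω[A⁄k] :=
  Ideal.Cotangent.bracket (tensorBracket bracket) (tensorBracket_isAlt bracket alt)
    (tensorBracket_mul_right bracket leibniz)
    fun _ hx _ hy => tensorBracket_mem_ideal bracket alt leibniz hx hy

variable (alt : bracket.IsAlt)
  (leibniz : ∀ a b c, bracket a (b * c) = bracket a b * c + b * bracket a c)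

lemma koszulBracket_fromIdeal (x y : ideal k A) :
    koszulBracket bracket alt leibniz (fromIdeal k A x) (fromIdeal k A y) =
      fromIdeal k A
        ⟨tensorBracket bracket x y, tensorBracket_mem_ideal bracket alt leibniz x.2 y.2⟩ :=
  rfl

lemma koszulBracket_D (f g : A) :
    koszulBracket bracket alt leibniz (D k A f) (D k A g) = D k A (bracket f g) := by
  simp only [D_apply]
  refine (koszulBracket_fromIdeal bracket alt leibniz _ _).trans (congrArg _ (Subtype.ext ?_))
  simp [bracket_one_right bracket leibniz, ← alt.neg _ 1]

lemma koszulBracket_isAlt : (koszulBracket bracket alt leibniz).IsAlt :=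
  Ideal.Cotangent.bracket_isAlt _ _ _ _

lemma koszulBracket_jacobi
    (jacobi : ∀ a b c, bracket a (bracket b c) = bracket (bracket a b) c + bracket b (bracket a c))
    (ξ ζ η : Ω[A⁄k]) :
    koszulBracket bracket alt leibniz ξ (koszulBracket bracket alt leibniz ζ η) =
      koszulBracket bracket alt leibniz (koszulBracket bracket alt leibniz ξ ζ) η +
        koszulBracket bracket alt leibniz ζ (koszulBracket bracket alt leibniz ξ η) :=
  Ideal.Cotangent.bracket_jacobi _ _ _ _ (tensorBracket_jacobi bracket alt jacobi leibniz) ξ ζ η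

lemma koszulBracket_smul_right
    (ρ : Ω[A⁄k] →ₗ[A] Derivation k A A) (hρ : ∀ f b, ρ (D k A f) b = bracket f b)
    (a : A) (ξ ζ : Ω[A⁄k]) :
    koszulBracket bracket alt leibniz ξ (a • ζ) =
      a • koszulBracket bracket alt leibniz ξ ζ + ρ ξ a • ζ := by
  obtain ⟨x, rfl⟩ := fromIdeal_surjective k A ξ
  rw [← algebraMap_smul (A ⊗[k] A) a ζ, ← algebraMap_smul (A ⊗[k] A) a (koszulBracket _ _ _ _ _)]
  have h : tensorBracket bracket x (algebraMap A (A ⊗[k] A) a) • ζ =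
      ρ (fromIdeal k A x) a • ζ := by
    rw [smul_eq_lmul'_smul, lmul'_tensorBracket_of_mem bracket alt leibniz x.2,
      anchor_fromIdeal bracket leibniz ρ hρ]
    simp
  exact (Ideal.Cotangent.bracket_toCotangent_smul _ _ _ _ x _ ζ).trans (congrArg _ h)

lemma anchor_koszulBracket
    (ρ : Ω[A⁄k] →ₗ[A] Derivation k A A) (hρ : ∀ f b, ρ (D k A f) b = bracket f b)
    (jacobi : ∀ a b c, bracket a (bracket b c) = bracket (bracket a b) c + bracket b (bracket a c))
    (ξ ζ : Ω[A⁄k]) (a : A) :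
    ρ (koszulBracket bracket alt leibniz ξ ζ) a = ρ ξ (ρ ζ a) - ρ ζ (ρ ξ a) := by
  obtain ⟨x, rfl⟩ := fromIdeal_surjective k A ξ
  obtain ⟨y, rfl⟩ := fromIdeal_surjective k A ζ
  simp only [koszulBracket_fromIdeal, anchor_fromIdeal bracket leibniz ρ hρ]
  rw [← lmul'_tensorBracket_of_mem bracket alt leibniz x.2,
    ← lmul'_tensorBracket_of_mem bracket alt leibniz y.2, ← map_sub,
    tensorBracket_jacobi bracket alt jacobi leibniz, add_sub_cancel_right]

lemma koszulBracket_smul_D_smul_D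
    (ρ : Ω[A⁄k] →ₗ[A] Derivation k A A) (hρ : ∀ f b, ρ (D k A f) b = bracket f b)
    (a b f g : A) :
    koszulBracket bracket alt leibniz (a • D k A f) (b • D k A g) =
      (a * b) • D k A (bracket f g) + (a * bracket f b) • D k A g -
        (b * bracket g a) • D k A f := by
  have skew := (koszulBracket_isAlt bracket alt leibniz).neg
  rw [koszulBracket_smul_right bracket alt leibniz ρ hρ, ← skew,
    koszulBracket_smul_right bracket alt leibniz ρ hρ, ← skew, koszulBracket_D,
    map_smul, Derivation.smul_apply, hρ, hρ, smul_eq_mul]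
  module

end KaehlerDifferential

theorem kaehler_lie_rinehart_general
    (k A : Type) [Field k] [CommRing A] [Algebra k A]
    (bracket : A →ₗ[k] A →ₗ[k] A)
    (alt : ∀ a : A, bracket a a = 0)
    (jacobi : ∀ a b c : A,
      bracket a (bracket b c) = bracket (bracket a b) c + bracket b (bracket a c))
    (leibniz : ∀ a b c : A, bracket a (b * c) = bracket a b * c + b * bracket a c)
    (ρ : Ω[A⁄k] →ₗ[A] Derivation k A A)
    (hρ : ∀ f b : A, ρ (KaehlerDifferential.D k A f) b = bracket f b) :
    ∃ br : Ω[A⁄k] →ₗ[k] Ω[A⁄k] →ₗ[k] Ω[A⁄k],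
      (∀ a b f g : A,
        br (a • KaehlerDifferential.D k A f) (b • KaehlerDifferential.D k A g) =
          (a * b) • KaehlerDifferential.D k A (bracket f g)
            + (a * bracket f b) • KaehlerDifferential.D k A g
            - (b * bracket g a) • KaehlerDifferential.D k A f) ∧
      (∀ ξ : Ω[A⁄k], br ξ ξ = 0) ∧
      (∀ ξ ζ η : Ω[A⁄k], br ξ (br ζ η) = br (br ξ ζ) η + br ζ (br ξ η)) ∧
      (∀ (a : A) (ξ ζ : Ω[A⁄k]), br ξ (a • ζ) = a • br ξ ζ + (ρ ξ) a • ζ) ∧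
      (∀ (ξ ζ : Ω[A⁄k]) (a : A), ρ (br ξ ζ) a = ρ ξ (ρ ζ a) - ρ ζ (ρ ξ a)) :=
  open KaehlerDifferential in
  ⟨koszulBracket bracket alt leibniz,
    koszulBracket_smul_D_smul_D bracket alt leibniz ρ hρ,
    koszulBracket_isAlt bracket alt leibniz,
    koszulBracket_jacobi bracket alt leibniz jacobi,
    koszulBracket_smul_right bracket alt leibniz ρ hρ,
    anchor_koszulBracket bracket alt leibniz ρ hρ jacobi⟩

/-- For a Poisson algebra `A` over a field `k` of characteristic 0, the Kähler
differentials `Ω[A⁄k]` carry a `k`-bilinear bracket satisfying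
`[a df, b dg] = ab d{f,g} + a{f,b} dg − b{g,a} df`, which is alternating, satisfies the Jacobi
identity, the Leibniz rule `[ξ, a·ζ] = a·[ξ,ζ] + ρ(ξ)(a)·ζ`, and for which the anchor `ρ` is a
Lie algebra homomorphism; i.e. `(A, Ω[A⁄k])` is a Lie–Rinehart algebra over `k`. -/
theorem kaehler_lie_rinehart
    (k A : Type) [Field k] [CharZero k] [CommRing A] [Algebra k A]
    (bracket : A →ₗ[k] A →ₗ[k] A)
    (alt : ∀ a : A, bracket a a = 0)
    (jacobi : ∀ a b c : A,
      bracket a (bracket b c) = bracket (bracket a b) c + bracket b (bracket a c))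
    (leibniz : ∀ a b c : A, bracket a (b * c) = bracket a b * c + b * bracket a c)
    (ρ : Ω[A⁄k] →ₗ[A] Derivation k A A)
    (hρ : ∀ f b : A, ρ (KaehlerDifferential.D k A f) b = bracket f b) :
    ∃ br : Ω[A⁄k] →ₗ[k] Ω[A⁄k] →ₗ[k] Ω[A⁄k],
      (∀ a b f g : A,
        br (a • KaehlerDifferential.D k A f) (b • KaehlerDifferential.D k A g) =
          (a * b) • KaehlerDifferential.D k A (bracket f g)
            + (a * bracket f b) • KaehlerDifferential.D k A g
            - (b * bracket g a) • KaehlerDifferential.D k A f) ∧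
      (∀ ξ : Ω[A⁄k], br ξ ξ = 0) ∧
      (∀ ξ ζ η : Ω[A⁄k], br ξ (br ζ η) = br (br ξ ζ) η + br ζ (br ξ η)) ∧
      (∀ (a : A) (ξ ζ : Ω[A⁄k]), br ξ (a • ζ) = a • br ξ ζ + (ρ ξ) a • ζ) ∧
      (∀ (ξ ζ : Ω[A⁄k]) (a : A), ρ (br ξ ζ) a = ρ ξ (ρ ζ a) - ρ ζ (ρ ξ a)) :=
  kaehler_lie_rinehart_general k A bracket alt jacobi leibniz ρ hρ
end

section
/- Let k be a field of characteristic 0 and let A be a Poisson algebra over k whose module of Kähler differentials Ω_{A/k} is free over A with basis (dx_1, …, dx_ℓ). Then the trace map tr : A → A, tr(y) = Σ_{i=1}^ℓ c_i(d{y, x_i}), is a k-linear derivation of A, i.e. tr is k-linear and tr(yz) = y·tr(z) + z·tr(y) for all y, z ∈ A. -/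
/-!
Expanding `dz` in the basis `(dx_i)` and applying the Hamiltonian derivation `{y, -}` gives
`Σ_i c_i(dz) {y, x_i} = {y, z}`. Writing `{yz, x_i} = y {z, x_i} + z {y, x_i}` and applying the
Leibniz rule of `d` and the coordinates `c_i`, `tr (yz)` becomes `y tr z + z tr y` plus the two
cross terms `{z, y} + {y, z}`, which cancel by antisymmetry.
-/

open KaehlerDifferential

theorem Derivation.eq_sum_repr_smul {R A M ι : Type*} [CommRing R] [CommRing A] [Algebra R A]
    [AddCommGroup M] [Module A M] [Module R M] [IsScalarTower R A M] [Fintype ι]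
    (D' : Derivation R A M) {x : ι → A} (b : Module.Basis ι A (Ω[A⁄R]))
    (hb : ∀ i, b i = D R A (x i)) (z : A) :
    D' z = ∑ i, b.repr (D R A z) i • D' (x i) := by
  conv_lhs => rw [← D'.liftKaehlerDifferential_comp_D z, ← b.sum_repr (D R A z), map_sum]
  refine Finset.sum_congr rfl fun i _ => ?_
  rw [LinearMap.map_smul, hb, Derivation.liftKaehlerDifferential_comp_D]

namespace PoissonTrace

variable {k A ι : Type*} [CommRing k] [CommRing A] [Algebra k A] {bracket : A →ₗ[k] A →ₗ[k] A}

def hamiltonian (leibniz : ∀ a b c : A, bracket a (b * c) = bracket a b * c + b * bracket a c)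
    (y : A) : Derivation k A A :=
  Derivation.mk' (bracket y) fun a c => by rw [leibniz, smul_eq_mul, smul_eq_mul]; ring

theorem bracket_mul_left (alt : bracket.IsAlt)
    (leibniz : ∀ a b c : A, bracket a (b * c) = bracket a b * c + b * bracket a c) (y z w : A) :
    bracket (y * z) w = y * bracket z w + z * bracket y w := by
  rw [← alt.neg w (y * z), leibniz, ← alt.neg y w, ← alt.neg z w]
  ring

variable [Fintype ι] {x : ι → A} {b : Module.Basis ι A (Ω[A⁄k])}

theorem sum_repr_mul_bracket
    (leibniz : ∀ a b c : A, bracket a (b * c) = bracket a b * c + b * bracket a c)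
    (hb : ∀ i, b i = D k A (x i)) (y z : A) :
    ∑ i, b.repr (D k A z) i * bracket y (x i) = bracket y z :=
  ((hamiltonian leibniz y).eq_sum_repr_smul b hb z).symm

variable (bracket x b)

noncomputable def trace : A →ₗ[k] A :=
  ∑ i, (b.coord i).restrictScalars k ∘ₗ (D k A).toLinearMap ∘ₗ bracket.flip (x i)

theorem trace_apply (y : A) : trace bracket x b y = ∑ i, b.repr (D k A (bracket y (x i))) i := by
  simp [trace]

variable {bracket x b}

theorem trace_mul (alt : bracket.IsAlt)
    (leibniz : ∀ a b c : A, bracket a (b * c) = bracket a b * c + b * bracket a c)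
    (hb : ∀ i, b i = D k A (x i)) (y z : A) :
    trace bracket x b (y * z) = y * trace bracket x b z + z * trace bracket x b y := by
  have expand : ∀ i, b.repr (D k A (bracket (y * z) (x i))) i
      = y * b.repr (D k A (bracket z (x i))) i + b.repr (D k A y) i * bracket z (x i)
        + (z * b.repr (D k A (bracket y (x i))) i + b.repr (D k A z) i * bracket y (x i)) := by
    intro i
    simp only [bracket_mul_left alt leibniz, map_add, Derivation.leibniz, Finsupp.add_apply,
      map_smul, Finsupp.smul_apply, smul_eq_mul]
    ring
  simp only [trace_apply, expand, Finset.sum_add_distrib, ← Finset.mul_sum,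
    sum_repr_mul_bracket leibniz hb, ← alt.neg z y]
  ring

noncomputable def traceDerivation (alt : bracket.IsAlt)
    (leibniz : ∀ a b c : A, bracket a (b * c) = bracket a b * c + b * bracket a c)
    (hb : ∀ i, b i = D k A (x i)) : Derivation k A A :=
  Derivation.mk' (trace bracket x b) fun y z => by
    rw [trace_mul alt leibniz hb, smul_eq_mul, smul_eq_mul]

end PoissonTrace

theorem trace_is_derivation_general
    (k A : Type) [Field k] [CommRing A] [Algebra k A]
    (bracket : A →ₗ[k] A →ₗ[k] A)
    (alt : ∀ a : A, bracket a a = 0)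
    (leibniz : ∀ a b c : A, bracket a (b * c) = bracket a b * c + b * bracket a c)
    (ℓ : ℕ) (x : Fin ℓ → A) (b : Module.Basis (Fin ℓ) A (Ω[A⁄k]))
    (hb : ∀ i, b i = KaehlerDifferential.D k A (x i)) :
    ∃ D : Derivation k A A,
      ∀ y : A, D y = ∑ i, b.repr (KaehlerDifferential.D k A (bracket y (x i))) i :=
  ⟨PoissonTrace.traceDerivation alt leibniz hb, PoissonTrace.trace_apply bracket x b⟩

/-- Let `A` be a Poisson algebra over a field `k` of characteristic 0 whose Kähler
differentials are free with basis `(dx_1, …, dx_ℓ)`.  Then the trace map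
`tr(y) = Σ_i c_i(d{y, x_i})` is a `k`-linear derivation of `A`. -/
theorem trace_is_derivation
    (k A : Type) [Field k] [CharZero k] [CommRing A] [Algebra k A]
    (bracket : A →ₗ[k] A →ₗ[k] A)
    (alt : ∀ a : A, bracket a a = 0)
    (jacobi : ∀ a b c : A,
      bracket a (bracket b c) = bracket (bracket a b) c + bracket b (bracket a c))
    (leibniz : ∀ a b c : A, bracket a (b * c) = bracket a b * c + b * bracket a c)
    (ℓ : ℕ) (x : Fin ℓ → A) (b : Module.Basis (Fin ℓ) A (Ω[A⁄k]))
    (hb : ∀ i, b i = KaehlerDifferential.D k A (x i)) :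
    ∃ D : Derivation k A A,
      ∀ y : A, D y = ∑ i, b.repr (KaehlerDifferential.D k A (bracket y (x i))) i :=
  trace_is_derivation_general k A bracket alt leibniz ℓ x b hb
end

section
/- Let k be a field of characteristic 0 and let A be a Poisson algebra over k whose module of Kähler differentials Ω_{A/k} is free over A with basis (dx_1, …, dx_ℓ). Then the trace map tr : A → A satisfies the cocycle identity tr({a, b}) = {a, tr(b)} − {b, tr(a)} for all a, b ∈ A. -/
/-!
The Lie–Rinehart bracket `[d a, -]` on `Ω[A⁄k]` satisfies `d{a, z} = [d a, d z]`: the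
difference is a derivation in `z` vanishing on the `x_j`, hence zero because the `d x_j` form a
basis. In coordinates, with `M a` the matrix of `[d a, -]`, the Jacobi identity then gives
`M {a, c} = {a, M c} + M c * M a - {c, M a} - M a * M c` (brackets applied entrywise), and the
two products have the same trace.
-/

open KaehlerDifferential

theorem Derivation.eq_zero_of_basis_D {R A M ι : Type*} [CommRing R] [CommRing A] [Algebra R A]
    [AddCommGroup M] [Module A M] [Module R M] [IsScalarTower R A M]
    {x : ι → A} (b : Module.Basis ι A (Ω[A⁄R])) (hb : ∀ i, b i = D R A (x i))
    (δ : Derivation R A M) (hδ : ∀ i, δ (x i) = 0) : δ = 0 := by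
  have hlift : δ.liftKaehlerDifferential = 0 :=
    b.ext fun i => by rw [hb, Derivation.liftKaehlerDifferential_comp_D, hδ, LinearMap.zero_apply]
  ext z
  rw [← δ.liftKaehlerDifferential_comp_D, hlift, LinearMap.zero_apply, Derivation.zero_apply]

namespace PoissonKaehler

variable {k A ι : Type*} [CommRing k] [CommRing A] [Algebra k A] [Fintype ι]
  (bracket : A →ₗ[k] A →ₗ[k] A) (x : ι → A) (b : Module.Basis ι A (Ω[A⁄k]))

/-- The Lie–Rinehart bracket `[d a, -]` on `Ω[A⁄k]`, computed in the basis `b`: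
`[d a, Σ f_j dx_j] = Σ ({a, f_j} dx_j + f_j d{a, x_j})`. -/
noncomputable def lieDerivative (a : A) : Ω[A⁄k] →ₗ[k] Ω[A⁄k] where
  toFun ω := ∑ j, (bracket a (b.repr ω j) • b j + b.repr ω j • D k A (bracket a (x j)))
  map_add' ω η := by
    simp only [map_add, Finsupp.add_apply, add_smul, ← Finset.sum_add_distrib]
    exact Finset.sum_congr rfl fun _ _ => by abel
  map_smul' r ω := by
    have hrepr : b.repr (r • ω) = r • b.repr ω := by
      rw [← algebraMap_smul A r ω, map_smul, algebraMap_smul]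
    simp only [hrepr, Finsupp.smul_apply, map_smul, smul_assoc, smul_add, Finset.smul_sum,
      RingHom.id_apply]

theorem lieDerivative_apply (a : A) (ω : Ω[A⁄k]) :
    lieDerivative bracket x b a ω =
      ∑ j, (bracket a (b.repr ω j) • b j + b.repr ω j • D k A (bracket a (x j))) :=
  rfl

theorem repr_lieDerivative (a : A) (ω : Ω[A⁄k]) (i : ι) :
    b.repr (lieDerivative bracket x b a ω) i =
      bracket a (b.repr ω i) + ∑ j, b.repr ω j * b.repr (D k A (bracket a (x j))) i := by
  classical
  simp only [lieDerivative_apply, map_sum, map_add, map_smul, b.repr_self, Finsupp.finsetSum_apply,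
    Finsupp.add_apply, Finsupp.smul_apply, Finsupp.single_apply, smul_eq_mul, mul_ite, mul_one,
    mul_zero, Finset.sum_add_distrib, Finset.sum_ite_eq', Finset.mem_univ, if_true]

variable {bracket}
variable (leibniz : ∀ a b c : A, bracket a (b * c) = bracket a b * c + b * bracket a c)
include leibniz

theorem bracket_one (a : A) : bracket a 1 = 0 := by
  simpa using leibniz a 1 1

theorem lieDerivative_smul (a f : A) (ω : Ω[A⁄k]) :
    lieDerivative bracket x b a (f • ω) =
      bracket a f • ω + f • lieDerivative bracket x b a ω := by
  rw [lieDerivative_apply, lieDerivative_apply]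
  conv_rhs => arg 1; rw [← b.sum_repr ω]
  simp only [map_smul, Finsupp.smul_apply, smul_eq_mul, leibniz,
    Finset.smul_sum, smul_add, ← Finset.sum_add_distrib, add_smul, smul_smul]
  exact Finset.sum_congr rfl fun _ _ => by ring_nf; abel

theorem lieDerivative_basis (a : A) (j : ι) :
    lieDerivative bracket x b a (b j) = D k A (bracket a (x j)) := by
  classical
  rw [lieDerivative_apply, Finset.sum_eq_single j]
  · simp [bracket_one leibniz]
  · intro i _ hij
    simp [hij.symm]
  · simp

noncomputable def bracketDefect (a : A) : Derivation k A (Ω[A⁄k]) :=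
  Derivation.mk' ((D k A).toLinearMap ∘ₗ bracket a - lieDerivative bracket x b a ∘ₗ D k A)
    fun z w => by
      simp only [LinearMap.sub_apply, LinearMap.comp_apply, Derivation.coeFn_coe, leibniz,
        map_add, Derivation.leibniz, lieDerivative_smul x b leibniz, smul_sub]
      abel

theorem D_bracket (hb : ∀ i, b i = D k A (x i)) (a z : A) :
    D k A (bracket a z) = lieDerivative bracket x b a (D k A z) := by
  have hδ : bracketDefect x b leibniz a = 0 :=
    Derivation.eq_zero_of_basis_D b hb _ fun j => by
      simp [bracketDefect, ← hb, lieDerivative_basis x b leibniz]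
  exact sub_eq_zero.mp (Derivation.congr_fun hδ z)

theorem repr_D_bracket (hb : ∀ i, b i = D k A (x i)) (a z : A) (j : ι) :
    b.repr (D k A (bracket a z)) j =
      bracket a (b.repr (D k A z) j) +
        ∑ i, b.repr (D k A z) i * b.repr (D k A (bracket a (x i))) j := by
  rw [D_bracket x b leibniz hb, repr_lieDerivative]

variable (bracket) in
/-- Row `i` holds the coordinates of `d{a, x_i} = [d a, d x_i]`, so this is the transposed matrix
of `[d a, -]` in the basis `b`. -/
noncomputable def bracketMatrix (a : A) : Matrix ι ι A :=
  Matrix.of fun i j => b.repr (D k A (bracket a (x i))) j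

variable (jacobi : ∀ a b c : A,
  bracket a (bracket b c) = bracket (bracket a b) c + bracket b (bracket a c))
include jacobi

theorem bracketMatrix_bracket (hb : ∀ i, b i = D k A (x i)) (a c : A) :
    bracketMatrix bracket x b (bracket a c) =
      (bracketMatrix bracket x b c).map (bracket a) +
          bracketMatrix bracket x b c * bracketMatrix bracket x b a -
        ((bracketMatrix bracket x b a).map (bracket c) +
          bracketMatrix bracket x b a * bracketMatrix bracket x b c) := by
  ext i j
  have hjac : bracket (bracket a c) (x i) =
      bracket a (bracket c (x i)) - bracket c (bracket a (x i)) :=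
    eq_sub_of_add_eq (jacobi a c (x i)).symm
  simp only [bracketMatrix, Matrix.of_apply, Matrix.sub_apply, Matrix.add_apply, Matrix.map_apply,
    Matrix.mul_apply, hjac, map_sub, Finsupp.sub_apply]
  rw [repr_D_bracket x b leibniz hb a (bracket c (x i)),
    repr_D_bracket x b leibniz hb c (bracket a (x i))]

theorem trace_bracketMatrix_bracket (hb : ∀ i, b i = D k A (x i)) (a c : A) :
    (bracketMatrix bracket x b (bracket a c)).trace =
      bracket a (bracketMatrix bracket x b c).trace -
        bracket c (bracketMatrix bracket x b a).trace := by
  rw [bracketMatrix_bracket x b leibniz jacobi hb, Matrix.trace_sub, Matrix.trace_add,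
    Matrix.trace_add, Matrix.trace_mul_comm (bracketMatrix bracket x b c),
    AddMonoidHom.map_trace (bracket a), AddMonoidHom.map_trace (bracket c)]
  abel

end PoissonKaehler

theorem trace_cocycle_identity_general
    (k A : Type) [Field k] [CommRing A] [Algebra k A]
    (bracket : A →ₗ[k] A →ₗ[k] A)
    (jacobi : ∀ a b c : A,
      bracket a (bracket b c) = bracket (bracket a b) c + bracket b (bracket a c))
    (leibniz : ∀ a b c : A, bracket a (b * c) = bracket a b * c + b * bracket a c)
    (ℓ : ℕ) (x : Fin ℓ → A) (b : Module.Basis (Fin ℓ) A (Ω[A⁄k]))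
    (hb : ∀ i, b i = KaehlerDifferential.D k A (x i))
    (tr : A → A)
    (htr : ∀ y : A, tr y = ∑ i, b.repr (KaehlerDifferential.D k A (bracket y (x i))) i) :
    ∀ a c : A, tr (bracket a c) = bracket a (tr c) - bracket c (tr a) := by
  have htr_eq_trace : ∀ y, tr y = (PoissonKaehler.bracketMatrix bracket x b y).trace := htr
  intro a c
  simp only [htr_eq_trace]
  exact PoissonKaehler.trace_bracketMatrix_bracket x b leibniz jacobi hb a c

/-- With `A` a Poisson algebra over a field `k` of characteristic 0 whose Kähler
differentials are free with basis `(dx_1, …, dx_ℓ)`, the trace map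
`tr(y) = Σ_i c_i(d{y, x_i})` satisfies the cocycle identity
`tr({a, b}) = {a, tr(b)} − {b, tr(a)}` for all `a, b ∈ A`. -/
theorem trace_cocycle_identity
    (k A : Type) [Field k] [CharZero k] [CommRing A] [Algebra k A]
    (bracket : A →ₗ[k] A →ₗ[k] A)
    (alt : ∀ a : A, bracket a a = 0)
    (jacobi : ∀ a b c : A,
      bracket a (bracket b c) = bracket (bracket a b) c + bracket b (bracket a c))
    (leibniz : ∀ a b c : A, bracket a (b * c) = bracket a b * c + b * bracket a c)
    (ℓ : ℕ) (x : Fin ℓ → A) (b : Module.Basis (Fin ℓ) A (Ω[A⁄k]))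
    (hb : ∀ i, b i = KaehlerDifferential.D k A (x i))
    (tr : A → A)
    (htr : ∀ y : A, tr y = ∑ i, b.repr (KaehlerDifferential.D k A (bracket y (x i))) i) :
    ∀ a c : A, tr (bracket a c) = bracket a (tr c) - bracket c (tr a) :=
  trace_cocycle_identity_general k A bracket jacobi leibniz ℓ x b hb tr htr
end

section
/- Let k be a field of characteristic 0, A = k[x_1, x_2, x_3], φ ∈ A, and equip A with the Jacobian Poisson bracket {f, g}_φ = det M(f,g,φ). Then with respect to the standard basis (dx_1, dx_2, dx_3) of Ω_{A/k}, the trace map vanishes identically: tr(y) = 0 for all y ∈ A. In particular tr(x_i) = 0 for i = 1, 2, 3, i.e. every Jacobian (potential) Poisson structure on k[x_1, x_2, x_3] is unimodular. -/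
/-!
Write `∇f` for the gradient `(∂₀f, ∂₁f, ∂₂f)`. Expanding the Jacobian determinant along the row
`∇xᵢ = eᵢ` gives `{y, xᵢ}_φ = (∇φ × ∇y)ᵢ`, and the coordinates of `d{y, xᵢ}_φ` in the basis
`(dxⱼ)` are the partial derivatives `∂ⱼ{y, xᵢ}_φ`. Hence `tr y = div (∇φ × ∇y)`, which vanishes
because partial derivatives commute (`div (∇f × ∇g) = ∇g · curl ∇f - ∇f · curl ∇g = 0`).
-/

open MvPolynomial Matrix

namespace MvPolynomial

variable {R σ : Type*} [DecidableEq σ]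

theorem pderiv_pderiv_comm [CommSemiring R] (i j : σ) (f : MvPolynomial σ R) :
    pderiv i (pderiv j f) = pderiv j (pderiv i f) := by
  induction f using MvPolynomial.induction_on with
  | C a => simp
  | add p q hp hq => simp [hp, hq]
  | mul_X p n hp =>
    simp only [Derivation.leibniz, pderiv_X, map_add, smul_eq_mul, Pi.single_apply]
    split_ifs <;> simp [hp] <;> ring

noncomputable def grad [CommSemiring R] (f : MvPolynomial σ R) : σ → MvPolynomial σ R :=
  fun i => pderiv i f

theorem grad_X [CommSemiring R] (i : σ) : grad (X i : MvPolynomial σ R) = Pi.single i 1 := by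
  ext1 j
  rw [grad, pderiv_X, Pi.single_comm]

theorem sum_pderiv_cross_grad [CommRing R] (f g : MvPolynomial (Fin 3) R) :
    ∑ i, pderiv i ((grad f ⨯₃ grad g) i) = 0 := by
  simp only [grad, cross_apply, Fin.sum_univ_three, Matrix.cons_val, map_sub, Derivation.leibniz,
    smul_eq_mul]
  rw [pderiv_pderiv_comm 1 0 f, pderiv_pderiv_comm 2 0 f, pderiv_pderiv_comm 2 1 f,
    pderiv_pderiv_comm 1 0 g, pderiv_pderiv_comm 2 0 g, pderiv_pderiv_comm 2 1 g]
  ring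

theorem det_grad_X_grad [CommRing R] (f φ : MvPolynomial (Fin 3) R) (i : Fin 3) :
    Matrix.det !![pderiv 0 f, pderiv 1 f, pderiv 2 f;
      pderiv 0 (X i), pderiv 1 (X i), pderiv 2 (X i);
      pderiv 0 φ, pderiv 1 φ, pderiv 2 φ] = (grad φ ⨯₃ grad f) i := by
  have hrows : !![pderiv 0 f, pderiv 1 f, pderiv 2 f;
      pderiv 0 (X i), pderiv 1 (X i), pderiv 2 (X i);
      pderiv 0 φ, pderiv 1 φ, pderiv 2 φ] = ![grad f, grad (X i), grad φ] := by
    ext a b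
    fin_cases a <;> fin_cases b <;> rfl
  rw [hrows, ← triple_product_eq_det, triple_product_permutation, grad_X,
    single_dotProduct, one_mul]

theorem _root_.Module.Basis.repr_D_eq_pderiv [CommRing R]
    (b : Module.Basis σ (MvPolynomial σ R) (Ω[MvPolynomial σ R⁄R]))
    (hb : ∀ i, b i = KaehlerDifferential.D R (MvPolynomial σ R) (X i))
    (i : σ) (f : MvPolynomial σ R) :
    b.repr (KaehlerDifferential.D R (MvPolynomial σ R) f) i = pderiv i f := by
  have hcoord : (b.coord i).compDer (KaehlerDifferential.D R (MvPolynomial σ R)) = pderiv i := by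
    refine MvPolynomial.derivation_ext fun j => ?_
    change b.coord i (KaehlerDifferential.D R (MvPolynomial σ R) (X j)) = _
    rw [← hb j, Module.Basis.coord_apply, b.repr_self, pderiv_X,
      Finsupp.single_apply, Pi.single_apply]
  exact DFunLike.congr_fun hcoord f

end MvPolynomial

theorem jacobian_poisson_unimodular_general
    (k : Type) [Field k] (φ : MvPolynomial (Fin 3) k)
    (br : MvPolynomial (Fin 3) k → MvPolynomial (Fin 3) k → MvPolynomial (Fin 3) k)
    (hbr : ∀ f g, br f g = Matrix.det
      !![pderiv 0 f, pderiv 1 f, pderiv 2 f;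
         pderiv 0 g, pderiv 1 g, pderiv 2 g;
         pderiv 0 φ, pderiv 1 φ, pderiv 2 φ])
    (b : Module.Basis (Fin 3) (MvPolynomial (Fin 3) k) (Ω[MvPolynomial (Fin 3) k⁄k]))
    (hb : ∀ i, b i = KaehlerDifferential.D k (MvPolynomial (Fin 3) k) (X i))
    (tr : MvPolynomial (Fin 3) k → MvPolynomial (Fin 3) k)
    (htr : ∀ y, tr y =
      ∑ i, b.repr (KaehlerDifferential.D k (MvPolynomial (Fin 3) k) (br y (X i))) i) :
    (∀ y, tr y = 0) ∧ (∀ i : Fin 3, tr (X i) = 0) := by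
  have htr_zero : ∀ y, tr y = 0 := fun y => by
    calc tr y = ∑ i, pderiv i (br y (X i)) := by simp only [htr, b.repr_D_eq_pderiv hb]
      _ = ∑ i, pderiv i ((grad φ ⨯₃ grad y) i) := by simp only [hbr, det_grad_X_grad]
      _ = 0 := sum_pderiv_cross_grad φ y
  exact ⟨htr_zero, fun i => htr_zero (X i)⟩

/-- For `A = k[x_1, x_2, x_3]` with the Jacobian Poisson bracket
`{f, g}_φ = det M(f, g, φ)` attached to a potential `φ`, the trace map with respect to the
standard basis `(dx_1, dx_2, dx_3)` of `Ω[A⁄k]` vanishes identically: `tr(y) = 0` for all `y`.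
In particular `tr(x_i) = 0` for `i = 1, 2, 3`, i.e. every Jacobian Poisson structure on
`k[x_1, x_2, x_3]` is unimodular. -/
theorem jacobian_poisson_unimodular
    (k : Type) [Field k] [CharZero k] (φ : MvPolynomial (Fin 3) k)
    (br : MvPolynomial (Fin 3) k → MvPolynomial (Fin 3) k → MvPolynomial (Fin 3) k)
    (hbr : ∀ f g, br f g = Matrix.det
      !![pderiv 0 f, pderiv 1 f, pderiv 2 f;
         pderiv 0 g, pderiv 1 g, pderiv 2 g;
         pderiv 0 φ, pderiv 1 φ, pderiv 2 φ])
    (b : Module.Basis (Fin 3) (MvPolynomial (Fin 3) k) (Ω[MvPolynomial (Fin 3) k⁄k]))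
    (hb : ∀ i, b i = KaehlerDifferential.D k (MvPolynomial (Fin 3) k) (X i))
    (tr : MvPolynomial (Fin 3) k → MvPolynomial (Fin 3) k)
    (htr : ∀ y, tr y =
      ∑ i, b.repr (KaehlerDifferential.D k (MvPolynomial (Fin 3) k) (br y (X i))) i) :
    (∀ y, tr y = 0) ∧ (∀ i : Fin 3, tr (X i) = 0) :=
  jacobian_poisson_unimodular_general k φ br hbr b hb tr htr
end
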